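/- Let μ, s, ω, σ ∈ ℝ, γ > 0, let rₑ > 0 satisfy μ + s·rₑ² − rₑ⁴ = 0, and let θ₀ ∈ ℝ. Define z : ℝ → ℂ by z(t) = rₑ · exp( i·(θ₀ + γ·(ω + σ·s·rₑ²)·t) ). Then for every t ∈ ℝ, z is differentiable at t with z′(t) = γ·((μ + iω)·z(t) + s·(1 + iσ)·|z(t)|²·z(t) − |z(t)|⁴·z(t)); i.e., uniform rotation on the circle of radius rₑ with angular velocity γ·(ω + σ·s·rₑ²) is an exact solution of the noise-free augmented Bautin normal form, so each positive equilibrium radius of the radial equation gives rise to a limit cycle of the planar system. -/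

import Mathlib

/-!
On the circle `‖z‖ = rₑ` the radial rate `μ + s rₑ² − rₑ⁴` vanishes, so there the Bautin field
reduces to the pure rotation `z ↦ i γ (ω + σ s rₑ²) z`; and `t ↦ rₑ e^{i(θ₀ + Ω t)}` has derivative
`i Ω z(t)`.
-/

open Complex

noncomputable def bautinField (μ s ω σ γ : ℝ) (z : ℂ) : ℂ :=
  γ * ((μ + ω * I) * z + s * (1 + σ * I) * (‖z‖ : ℂ) ^ 2 * z - (‖z‖ : ℂ) ^ 4 * z)

lemma hasDerivAt_ofReal_mul_cexp_I_mul (r θ₀ Ω t : ℝ) :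
    HasDerivAt (fun τ : ℝ => (r : ℂ) * exp (I * (θ₀ + Ω * τ)))
      (I * Ω * (r * exp (I * (θ₀ + Ω * t)))) t := by
  have hτ : HasDerivAt (fun τ : ℝ => (τ : ℂ)) 1 t := (hasDerivAt_id t).ofReal_comp
  have hz := (((hτ.const_mul (Ω : ℂ)).const_add (θ₀ : ℂ)).const_mul I).cexp.const_mul (r : ℂ)
  exact hz.congr_deriv (by ring)

lemma norm_ofReal_mul_cexp_I_mul (r θ₀ Ω t : ℝ) :
    ‖(r : ℂ) * exp (I * (θ₀ + Ω * t))‖ = |r| := by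
  rw [norm_mul, ← ofReal_mul, ← ofReal_add, norm_exp_I_mul_ofReal, norm_real, mul_one,
    Real.norm_eq_abs]

lemma bautinField_eq_I_mul_of_norm_eq {μ s ω σ γ r : ℝ} {z : ℂ} (hz : ‖z‖ = |r|)
    (heq : μ + s * r ^ 2 - r ^ 4 = 0) :
    bautinField μ s ω σ γ z = I * (γ * (ω + σ * s * r ^ 2) : ℝ) * z := by
  have hz2 : (‖z‖ : ℂ) ^ 2 = (r : ℂ) ^ 2 := by rw [hz, ← ofReal_pow, sq_abs, ofReal_pow]
  have hz4 : (‖z‖ : ℂ) ^ 4 = ((r : ℂ) ^ 2) ^ 2 := by rw [← hz2]; ring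
  have heqC : (μ : ℂ) + s * r ^ 2 - r ^ 4 = 0 := by exact_mod_cast heq
  rw [bautinField, hz2, hz4]
  push_cast
  linear_combination (γ : ℂ) * z * heqC

theorem hasDerivAt_rotation_bautinField (μ s ω σ γ r θ₀ : ℝ)
    (heq : μ + s * r ^ 2 - r ^ 4 = 0) (t : ℝ) :
    HasDerivAt (fun τ : ℝ => (r : ℂ) * exp (I * (θ₀ + (γ * (ω + σ * s * r ^ 2) : ℝ) * τ)))
      (bautinField μ s ω σ γ (r * exp (I * (θ₀ + (γ * (ω + σ * s * r ^ 2) : ℝ) * t)))) t := by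
  rw [bautinField_eq_I_mul_of_norm_eq (norm_ofReal_mul_cexp_I_mul _ _ _ _) heq]
  exact hasDerivAt_ofReal_mul_cexp_I_mul _ _ _ _

theorem bautin_limit_cycle_solution_general (μ s ω σ γ : ℝ)
    (re : ℝ) (heq : μ + s * re^2 - re^4 = 0) (θ₀ : ℝ) :
    ∀ t : ℝ, HasDerivAt
      (fun τ : ℝ => (re : ℂ) * Complex.exp (Complex.I
        * ((θ₀ : ℂ) + (γ : ℂ) * ((ω : ℂ) + (σ : ℂ) * (s : ℂ) * (re : ℂ)^2) * (τ : ℂ))))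
      ((γ : ℂ) * (((μ : ℂ) + (ω : ℂ) * Complex.I)
          * ((re : ℂ) * Complex.exp (Complex.I
            * ((θ₀ : ℂ) + (γ : ℂ) * ((ω : ℂ) + (σ : ℂ) * (s : ℂ) * (re : ℂ)^2) * (t : ℂ))))
        + (s : ℂ) * (1 + (σ : ℂ) * Complex.I)
          * (‖(re : ℂ) * Complex.exp (Complex.I
            * ((θ₀ : ℂ) + (γ : ℂ) * ((ω : ℂ) + (σ : ℂ) * (s : ℂ) * (re : ℂ)^2) * (t : ℂ)))‖ : ℂ)^2
          * ((re : ℂ) * Complex.exp (Complex.I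
            * ((θ₀ : ℂ) + (γ : ℂ) * ((ω : ℂ) + (σ : ℂ) * (s : ℂ) * (re : ℂ)^2) * (t : ℂ))))
        - (‖(re : ℂ) * Complex.exp (Complex.I
            * ((θ₀ : ℂ) + (γ : ℂ) * ((ω : ℂ) + (σ : ℂ) * (s : ℂ) * (re : ℂ)^2) * (t : ℂ)))‖ : ℂ)^4
          * ((re : ℂ) * Complex.exp (Complex.I
            * ((θ₀ : ℂ) + (γ : ℂ) * ((ω : ℂ) + (σ : ℂ) * (s : ℂ) * (re : ℂ)^2) * (t : ℂ)))))) t := by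
  intro t
  have hΩ : (γ : ℂ) * ((ω : ℂ) + (σ : ℂ) * (s : ℂ) * (re : ℂ) ^ 2)
      = (γ * (ω + σ * s * re ^ 2) : ℝ) := by push_cast; ring
  rw [hΩ]
  exact hasDerivAt_rotation_bautinField μ s ω σ γ re θ₀ heq t

/-- If rₑ > 0 satisfies μ + s·rₑ² − rₑ⁴ = 0, then uniform rotation
z(t) = rₑ·exp(i(θ₀ + γ(ω + σ·s·rₑ²)t)) is an exact solution of the noise-free augmented
Bautin normal form. -/
theorem bautin_limit_cycle_solution (μ s ω σ γ : ℝ) (hγ : 0 < γ)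
    (re : ℝ) (hre : 0 < re) (heq : μ + s * re^2 - re^4 = 0) (θ₀ : ℝ) :
    ∀ t : ℝ, HasDerivAt
      (fun τ : ℝ => (re : ℂ) * Complex.exp (Complex.I
        * ((θ₀ : ℂ) + (γ : ℂ) * ((ω : ℂ) + (σ : ℂ) * (s : ℂ) * (re : ℂ)^2) * (τ : ℂ))))
      ((γ : ℂ) * (((μ : ℂ) + (ω : ℂ) * Complex.I)
          * ((re : ℂ) * Complex.exp (Complex.I
            * ((θ₀ : ℂ) + (γ : ℂ) * ((ω : ℂ) + (σ : ℂ) * (s : ℂ) * (re : ℂ)^2) * (t : ℂ))))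
        + (s : ℂ) * (1 + (σ : ℂ) * Complex.I)
          * (‖(re : ℂ) * Complex.exp (Complex.I
            * ((θ₀ : ℂ) + (γ : ℂ) * ((ω : ℂ) + (σ : ℂ) * (s : ℂ) * (re : ℂ)^2) * (t : ℂ)))‖ : ℂ)^2
          * ((re : ℂ) * Complex.exp (Complex.I
            * ((θ₀ : ℂ) + (γ : ℂ) * ((ω : ℂ) + (σ : ℂ) * (s : ℂ) * (re : ℂ)^2) * (t : ℂ))))
        - (‖(re : ℂ) * Complex.exp (Complex.I
            * ((θ₀ : ℂ) + (γ : ℂ) * ((ω : ℂ) + (σ : ℂ) * (s : ℂ) * (re : ℂ)^2) * (t : ℂ)))‖ : ℂ)^4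
          * ((re : ℂ) * Complex.exp (Complex.I
            * ((θ₀ : ℂ) + (γ : ℂ) * ((ω : ℂ) + (σ : ℂ) * (s : ℂ) * (re : ℂ)^2) * (t : ℂ)))))) t :=
  bautin_limit_cycle_solution_general μ s ω σ γ re heq θ₀
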